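/- Let W be a nonnegative random variable, B exponentially distributed with rate μ > 0, and A exponentially distributed with rate λ > 0, with W, B, A mutually independent, let a > 0 be real, and write Z(y) = E[exp(−y·W)]. Then P(A > W + max(B − a·W, 0)) = Z(λ) − (λ/(μ + λ))·Z(λ + a·μ). -/

import Mathlib

open MeasureTheory ProbabilityTheory Real

/-!
The sojourn time `G = W + (B - a W)⁺` is independent of the exponential clock `A`, so
`P(A > G) = E[e^{-λ G}]`. Given `W = w`, integrating out `B ~ Exp(μ)` splits at `B = a w`:
below it `G = w`, above it `B - a w` is again `Exp(μ)`-distributed, which yields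
`E[e^{-λ G} | W = w] = e^{-λ w} (1 - λ/(μ+λ) e^{-μ a w})`. Taking expectations in `W` gives the
two Laplace transforms.
-/

section Independence

variable {Ω α β E : Type*} [MeasurableSpace Ω] [MeasurableSpace α] [MeasurableSpace β]
  [NormedAddCommGroup E] [NormedSpace ℝ E] {P : Measure Ω} [IsFiniteMeasure P]
  {X : Ω → α} {Y : Ω → β}

theorem ProbabilityTheory.IndepFun.integral_comp_eq_integral_integral (hXY : IndepFun X Y P)
    (hX : AEMeasurable X P) (hY : AEMeasurable Y P) {F : α × β → E} (hF : StronglyMeasurable F)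
    (hFi : Integrable (fun ω ↦ F (X ω, Y ω)) P) :
    ∫ ω, F (X ω, Y ω) ∂P = ∫ ω, ∫ y, F (X ω, y) ∂(P.map Y) ∂P := by
  have hmap : P.map (fun ω ↦ (X ω, Y ω)) = (P.map X).prod (P.map Y) :=
    (indepFun_iff_map_prod_eq_prod_map_map hX hY).mp hXY
  have hFi' : Integrable F ((P.map X).prod (P.map Y)) := by
    rw [← hmap]
    exact (integrable_map_measure hF.aestronglyMeasurable (hX.prodMk hY)).mpr hFi
  rw [← integral_map (hX.prodMk hY) hF.aestronglyMeasurable, hmap, integral_prod F hFi',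
    integral_map hX hF.integral_prod_right'.aestronglyMeasurable]

end Independence

section Exponential

variable {r : ℝ}

lemma expMeasure_real_Ioi (hr : 0 < r) {x : ℝ} (hx : 0 ≤ x) :
    (expMeasure r).real (Set.Ioi x) = exp (-r * x) := by
  have := isProbabilityMeasure_expMeasure hr
  rw [← Set.compl_Iic, measureReal_compl measurableSet_Iic, probReal_univ, ← cdf_eq_real,
    cdf_expMeasure_eq hr, if_pos hx, neg_mul]
  ring

lemma integral_expMeasure_eq_setIntegral (hr : 0 < r) (g : ℝ → ℝ) :
    ∫ x, g x ∂expMeasure r = ∫ x in Set.Ioi 0, r * exp (-r * x) * g x := by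
  change ∫ x, g x ∂volume.withDensity (exponentialPDF r) = _
  rw [integral_withDensity_eq_integral_toReal_smul (f := exponentialPDF r)
    (measurable_exponentialPDFReal r).ennreal_ofReal
    (Filter.Eventually.of_forall fun _ ↦ ENNReal.ofReal_lt_top),
    ← integral_Ici_eq_integral_Ioi, ← integral_indicator measurableSet_Ici]
  refine integral_congr_ae (Filter.Eventually.of_forall fun x ↦ ?_)
  by_cases hx : 0 ≤ x
  · simp [Set.indicator_of_mem (Set.mem_Ici.mpr hx), exponentialPDF_of_nonneg hx, hr.le,
      (exp_pos _).le]
  · simp [Set.indicator_of_notMem (show x ∉ Set.Ici 0 from hx),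
      exponentialPDF_of_neg (not_le.mp hx)]

lemma integral_exp_neg_mul_max_sub_expMeasure {μ lam c : ℝ} (hμ : 0 < μ) (hμlam : 0 < μ + lam)
    (hc : 0 ≤ c) :
    ∫ b, exp (-lam * max (b - c) 0) ∂expMeasure μ = 1 - lam / (μ + lam) * exp (-μ * c) := by
  set f : ℝ → ℝ := fun b ↦ μ * exp (-μ * b) * exp (-lam * max (b - c) 0)
  have hf_Ioc : Set.EqOn f (fun b ↦ μ * exp (-(μ * b))) (Set.Ioc 0 c) := fun b hb ↦ by
    simp [f, max_eq_right (sub_nonpos.mpr hb.2)]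
  have hf_Ioi : Set.EqOn f (fun b ↦ μ * exp (lam * c) * exp (-(μ + lam) * b)) (Set.Ioi c) :=
    fun b hb ↦ by
      have hcb : c ≤ b := le_of_lt hb
      simp only [f, max_eq_left (sub_nonneg.mpr hcb), mul_assoc, ← exp_add]
      ring_nf
  have hint_Ioc : IntegrableOn f (Set.Ioc 0 c) := by
    refine Continuous.integrableOn_Ioc ?_
    fun_prop
  have hint_Ioi : IntegrableOn f (Set.Ioi c) :=
    (integrableOn_congr_fun hf_Ioi measurableSet_Ioi).mpr
      ((exp_neg_integrableOn_Ioi c hμlam).const_mul _)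
  have h_Ioc : ∫ b in Set.Ioc 0 c, f b = 1 - exp (-μ * c) := by
    rw [setIntegral_congr_fun measurableSet_Ioc hf_Ioc, ← intervalIntegral.integral_of_le hc,
      intervalIntegral.integral_eq_sub_of_hasDerivAt (fun x _ ↦ hasDerivAt_neg_exp_mul_exp)
        ((by fun_prop : Continuous fun b ↦ μ * exp (-(μ * b))).intervalIntegrable _ _)]
    simp only [mul_zero, neg_zero, exp_zero, neg_mul]
    ring
  have h_Ioi : ∫ b in Set.Ioi c, f b = μ / (μ + lam) * exp (-μ * c) := by
    rw [setIntegral_congr_fun measurableSet_Ioi hf_Ioi, integral_const_mul,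
      integral_exp_mul_Ioi (by linarith) c, neg_div_neg_eq, mul_div_assoc', div_mul_eq_mul_div,
      mul_assoc, ← exp_add]
    ring_nf
  rw [integral_expMeasure_eq_setIntegral hμ, ← Set.Ioc_union_Ioi_eq_Ioi hc,
    setIntegral_union (Set.Ioc_disjoint_Ioi le_rfl) measurableSet_Ioi hint_Ioc hint_Ioi,
    h_Ioc, h_Ioi]
  field_simp
  ring

lemma integral_exp_neg_mul_add_max_sub_expMeasure {μ lam a w : ℝ} (hμ : 0 < μ)
    (hμlam : 0 < μ + lam) (ha : 0 ≤ a) (hw : 0 ≤ w) :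
    ∫ b, exp (-lam * (w + max (b - a * w) 0)) ∂expMeasure μ
      = exp (-lam * w) - lam / (μ + lam) * exp (-(lam + a * μ) * w) := by
  simp_rw [mul_add, exp_add]
  rw [integral_const_mul, integral_exp_neg_mul_max_sub_expMeasure hμ hμlam (mul_nonneg ha hw),
    mul_sub, mul_one, mul_left_comm, ← exp_add]
  ring_nf

end Exponential

section ExponentialClock

variable {Ω : Type*} [MeasurableSpace Ω] {P : Measure Ω} [IsFiniteMeasure P]

lemma integrable_exp_neg_mul_of_nonneg {X : Ω → ℝ} (hX : AEMeasurable X P)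
    (hXnn : ∀ᵐ ω ∂P, 0 ≤ X ω) {c : ℝ} (hc : 0 ≤ c) :
    Integrable (fun ω ↦ exp (-c * X ω)) P :=
  Integrable.of_bound (by fun_prop) 1 <| hXnn.mono fun ω hω ↦ by
    rw [norm_of_nonneg (exp_pos _).le, exp_le_one_iff, neg_mul, neg_nonpos]
    exact mul_nonneg hc hω

lemma measureReal_lt_of_indepFun_expMeasure {X Y : Ω → ℝ} {r : ℝ} (hXY : IndepFun X Y P)
    (hX : Measurable X) (hY : Measurable Y) (hXnn : ∀ᵐ ω ∂P, 0 ≤ X ω) (hr : 0 < r)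
    (hYlaw : P.map Y = expMeasure r) :
    P.real {ω | X ω < Y ω} = ∫ ω, exp (-r * X ω) ∂P := by
  set S : Set (ℝ × ℝ) := {p | p.1 < p.2}
  have hS : MeasurableSet S := measurableSet_lt measurable_fst measurable_snd
  have hSm : StronglyMeasurable (S.indicator (1 : ℝ × ℝ → ℝ)) :=
    stronglyMeasurable_const.indicator hS
  have hSi : Integrable (fun ω ↦ S.indicator 1 (X ω, Y ω)) P :=
    Integrable.of_bound (hSm.measurable.comp (hX.prodMk hY)).aestronglyMeasurable 1
      (ae_of_all _ fun ω ↦ norm_indicator_le_norm_self _ _ |>.trans (by simp))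
  have hslice (x : ℝ) : (fun y ↦ S.indicator (1 : ℝ × ℝ → ℝ) (x, y)) = (Set.Ioi x).indicator 1 :=
    rfl
  calc P.real {ω | X ω < Y ω} = ∫ ω, S.indicator 1 (X ω, Y ω) ∂P :=
        (integral_indicator_one (hS.preimage (hX.prodMk hY))).symm
    _ = ∫ ω, (expMeasure r).real (Set.Ioi (X ω)) ∂P := by
        simp_rw [hXY.integral_comp_eq_integral_integral hX.aemeasurable hY.aemeasurable hSm hSi,
          hYlaw, hslice, integral_indicator_one measurableSet_Ioi]
    _ = ∫ ω, exp (-r * X ω) ∂P :=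
        integral_congr_ae <| hXnn.mono fun ω hω ↦ expMeasure_real_Ioi hr hω

end ExponentialClock

/-- If `W` is nonnegative, `B` exponential with rate `μ > 0`, and `A`
exponential with rate `λ > 0`, all mutually independent, and `a > 0`, then
`P(A > W + max(B - a·W, 0)) = Z(λ) - (λ/(μ+λ))·Z(λ + a·μ)`,
where `Z(y) = E[exp(-y·W)]`. -/
theorem prob_interarrival_exceeds_sojourn
    {Ω : Type*} [MeasurableSpace Ω] (P : Measure Ω) [IsProbabilityMeasure P]
    (W B A : Ω → ℝ) (hWm : Measurable W) (hBm : Measurable B) (hAm : Measurable A)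
    (hWnonneg : ∀ ω, 0 ≤ W ω)
    (μ lam : ℝ) (hμ : 0 < μ) (hlam : 0 < lam)
    (hBlaw : Measure.map B P = expMeasure μ)
    (hAlaw : Measure.map A P = expMeasure lam)
    (hindep : iIndepFun ![W, B, A] P)
    (a : ℝ) (ha : 0 < a) :
    (P {ω | A ω > W ω + max (B ω - a * W ω) 0}).toReal
      = (∫ ω, Real.exp (-lam * W ω) ∂P)
        - (lam / (μ + lam)) * ∫ ω, Real.exp (-(lam + a * μ) * W ω) ∂P := by
  set G : Ω → ℝ := fun ω ↦ W ω + max (B ω - a * W ω) 0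
  have hGm : Measurable G := by fun_prop
  have hGnn : ∀ᵐ ω ∂P, 0 ≤ G ω := ae_of_all _ fun ω ↦ add_nonneg (hWnonneg ω) (le_max_right _ _)
  have hWnn : ∀ᵐ ω ∂P, 0 ≤ W ω := ae_of_all _ hWnonneg
  have hWB : IndepFun W B P := by simpa using hindep.indepFun (show (0 : Fin 3) ≠ 1 by decide)
  have hGA : IndepFun G A P := by
    have hmeas : ∀ i, Measurable (![W, B, A] i) := fun i ↦ by fin_cases i <;> assumption
    have hWB_A : IndepFun (fun ω ↦ (W ω, B ω)) A P := by
      simpa using hindep.indepFun_prodMk hmeas 0 1 2 (by decide) (by decide)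
    exact hWB_A.comp (φ := fun p ↦ p.1 + max (p.2 - a * p.1) 0) (by fun_prop) measurable_id
  calc (P {ω | A ω > G ω}).toReal = ∫ ω, exp (-lam * G ω) ∂P :=
        measureReal_lt_of_indepFun_expMeasure hGA hGm hAm hGnn hlam hAlaw
    _ = ∫ ω, ∫ b, exp (-lam * (W ω + max (b - a * W ω) 0)) ∂expMeasure μ ∂P := by
        rw [← hBlaw]
        exact hWB.integral_comp_eq_integral_integral hWm.aemeasurable hBm.aemeasurable
          (F := fun p ↦ exp (-lam * (p.1 + max (p.2 - a * p.1) 0)))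
          (by fun_prop : Continuous _).stronglyMeasurable
          (integrable_exp_neg_mul_of_nonneg hGm.aemeasurable hGnn hlam.le)
    _ = ∫ ω, exp (-lam * W ω) - lam / (μ + lam) * exp (-(lam + a * μ) * W ω) ∂P :=
        integral_congr_ae <| hWnn.mono fun ω hω ↦
          integral_exp_neg_mul_add_max_sub_expMeasure hμ (by linarith) ha.le hω
    _ = _ := by
        rw [integral_sub (integrable_exp_neg_mul_of_nonneg hWm.aemeasurable hWnn hlam.le)
          ((integrable_exp_neg_mul_of_nonneg hWm.aemeasurable hWnn (by positivity)).const_mul _),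
          integral_const_mul]
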